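/- Let n ≥ 1, let A be the Rees ring of the n-th Weyl algebra over ℂ, let a_1, …, a_n, b_1, …, b_n ∈ ℂ, and let g be the ℂ-algebra automorphism of A determined by g(x_i) = x_i + a_i·z, g(y_i) = y_i + b_i·z for 1 ≤ i ≤ n, and g(z) = −z. Then the fixed subalgebra A^g = {a ∈ A : g(a) = a} is isomorphic as a ℂ-algebra to the quotient of the free ℂ-algebra on the 2n+1 generators X_1, Y_1, …, X_n, Y_n, w by the two-sided ideal generated by X_i·Y_i − Y_i·X_i − w for 1 ≤ i ≤ n together with the commutators of all other pairs of generators (X_i·X_j − X_j·X_i and Y_i·Y_j − Y_j·Y_i for i ≠ j, X_i·Y_j − Y_j·X_i for i ≠ j, X_i·w − w·X_i, and Y_i·w − w·Y_i). -/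

import Mathlib

/-- Index type for the generators of the Rees ring of the `n`-th Weyl algebra:
`some (i, false)` is `xᵢ`, `some (i, true)` is `yᵢ`, and `none` is `z`. -/
abbrev ReesGen (n : ℕ) : Type := Option (Fin n × Bool)

/-- The defining relations of the Rees ring of the `n`-th Weyl algebra:
`xᵢ yᵢ = yᵢ xᵢ + z²`, and all other pairs of generators commute. -/
inductive ReesRel (n : ℕ) : FreeAlgebra ℂ (ReesGen n) → FreeAlgebra ℂ (ReesGen n) → Prop
  | weyl (i : Fin n) :
      ReesRel n (FreeAlgebra.ι ℂ (some (i, false)) * FreeAlgebra.ι ℂ (some (i, true)))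
        (FreeAlgebra.ι ℂ (some (i, true)) * FreeAlgebra.ι ℂ (some (i, false)) +
          FreeAlgebra.ι ℂ (none : ReesGen n) * FreeAlgebra.ι ℂ (none : ReesGen n))
  | comm (a b : ReesGen n)
      (h : ∀ i : Fin n, ¬(a = some (i, false) ∧ b = some (i, true)))
      (h' : ∀ i : Fin n, ¬(a = some (i, true) ∧ b = some (i, false))) :
      ReesRel n (FreeAlgebra.ι ℂ a * FreeAlgebra.ι ℂ b)
        (FreeAlgebra.ι ℂ b * FreeAlgebra.ι ℂ a)

/-- The Rees ring of the `n`-th Weyl algebra. -/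
abbrev ReesWeyl (n : ℕ) : Type := RingQuot (ReesRel n)

/-- The generator `xᵢ` of the Rees ring of the `n`-th Weyl algebra. -/
noncomputable def reesX (n : ℕ) (i : Fin n) : ReesWeyl n :=
  RingQuot.mkAlgHom ℂ (ReesRel n) (FreeAlgebra.ι ℂ (some (i, false)))

/-- The generator `yᵢ` of the Rees ring of the `n`-th Weyl algebra. -/
noncomputable def reesY (n : ℕ) (i : Fin n) : ReesWeyl n :=
  RingQuot.mkAlgHom ℂ (ReesRel n) (FreeAlgebra.ι ℂ (some (i, true)))

/-- The central generator `z` of the Rees ring of the `n`-th Weyl algebra. -/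
noncomputable def reesZ (n : ℕ) : ReesWeyl n :=
  RingQuot.mkAlgHom ℂ (ReesRel n) (FreeAlgebra.ι ℂ (none : ReesGen n))

/-- The degree-one subspace `V` of the Rees ring: the span of the images of the
`2n+1` generators. -/
noncomputable def reesV (n : ℕ) : Submodule ℂ (ReesWeyl n) :=
  Submodule.span ℂ (Set.range fun g : ReesGen n =>
    RingQuot.mkAlgHom ℂ (ReesRel n) (FreeAlgebra.ι ℂ g))

/-- The defining relations of the homogenized Weyl algebra on generators
`Xᵢ, Yᵢ, w`: `Xᵢ Yᵢ = Yᵢ Xᵢ + w`, and all other pairs of generators commute. -/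
inductive HWeylRel (n : ℕ) : FreeAlgebra ℂ (ReesGen n) → FreeAlgebra ℂ (ReesGen n) → Prop
  | weyl (i : Fin n) :
      HWeylRel n (FreeAlgebra.ι ℂ (some (i, false)) * FreeAlgebra.ι ℂ (some (i, true)))
        (FreeAlgebra.ι ℂ (some (i, true)) * FreeAlgebra.ι ℂ (some (i, false)) +
          FreeAlgebra.ι ℂ (none : ReesGen n))
  | comm (a b : ReesGen n)
      (h : ∀ i : Fin n, ¬(a = some (i, false) ∧ b = some (i, true)))
      (h' : ∀ i : Fin n, ¬(a = some (i, true) ∧ b = some (i, false))) :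
      HWeylRel n (FreeAlgebra.ι ℂ a * FreeAlgebra.ι ℂ b)
        (FreeAlgebra.ι ℂ b * FreeAlgebra.ι ℂ a)

/-- The homogenized Weyl algebra: generators `Xᵢ, Yᵢ, w` with `Xᵢ Yᵢ − Yᵢ Xᵢ = w`
and all other pairs of generators commuting. -/
abbrev HWeyl (n : ℕ) : Type := RingQuot (HWeylRel n)

/-- The fixed subalgebra `A^g` of a single algebra automorphism `g` of `A`. -/
def fixedSubalgebra1 {A : Type*} [Semiring A] [Algebra ℂ A]
    (g : A ≃ₐ[ℂ] A) : Subalgebra ℂ A where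
  carrier := {a | g a = a}
  mul_mem' := by
    intro a b ha hb
    show g (a * b) = a * b
    rw [map_mul, ha, hb]
  add_mem' := by
    intro a b ha hb
    show g (a + b) = a + b
    rw [map_add, ha, hb]
  algebraMap_mem' := fun r => g.commutes r

section Aux18

open RingQuot

/-- Induction principle for quotients of a free algebra. -/
lemma rq_induction {X : Type*} {rel : FreeAlgebra ℂ X → FreeAlgebra ℂ X → Prop}
    {P : RingQuot rel → Prop}
    (halg : ∀ r : ℂ, P (algebraMap ℂ _ r))
    (hgen : ∀ v : X, P (RingQuot.mkAlgHom ℂ rel (FreeAlgebra.ι ℂ v)))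
    (hmul : ∀ x y, P x → P y → P (x * y))
    (hadd : ∀ x y, P x → P y → P (x + y)) :
    ∀ t, P t := by
  intro t
  obtain ⟨f, rfl⟩ := RingQuot.mkAlgHom_surjective ℂ rel t
  induction f using FreeAlgebra.induction with
  | grade0 r => simpa using halg r
  | grade1 v => exact hgen v
  | mul x y hx hy => rw [map_mul]; exact hmul _ _ hx hy
  | add x y hx hy => rw [map_add]; exact hadd _ _ hx hy

variable (n : ℕ)

/-- `w`, the image of the central generator in the homogenized Weyl algebra. -/
noncomputable def hW : HWeyl n := RingQuot.mkAlgHom ℂ (HWeylRel n) (FreeAlgebra.ι ℂ (none : ReesGen n))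

lemma hW_comm (t : HWeyl n) : hW n * t = t * hW n := by
  induction t using rq_induction with
  | halg r => exact (Algebra.commutes r _).symm
  | hgen v =>
      have := RingQuot.mkAlgHom_rel ℂ (HWeylRel.comm (n := n) v none
        (fun i => by simp) (fun i => by simp))
      simp only [map_mul] at this
      exact this.symm
  | hmul x y hx hy => rw [← mul_assoc, hx, mul_assoc, hy, ← mul_assoc]
  | hadd x y hx hy => rw [mul_add, add_mul, hx, hy]

lemma rZ_comm (t : ReesWeyl n) : reesZ n * t = t * reesZ n := by
  induction t using rq_induction with
  | halg r => exact (Algebra.commutes r _).symm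
  | hgen v =>
      have := RingQuot.mkAlgHom_rel ℂ (ReesRel.comm (n := n) v none
        (fun i => by simp) (fun i => by simp))
      simp only [map_mul] at this
      exact this.symm
  | hmul x y hx hy => rw [← mul_assoc, hx, mul_assoc, hy, ← mul_assoc]
  | hadd x y hx hy => rw [mul_add, add_mul, hx, hy]

end Aux18
section Aux18M
variable (n : ℕ)

/-- The algebra `HWeyl n ⊕ HWeyl n · z`, a model of the Rees algebra. -/
def MW (n : ℕ) : Type := HWeyl n × HWeyl n

noncomputable instance : AddCommGroup (MW n) := inferInstanceAs (AddCommGroup (HWeyl n × HWeyl n))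
noncomputable instance : SMul ℂ (MW n) := ⟨fun r x => (r • x.1, r • x.2)⟩

@[simp] lemma MW.fst_add (x y : MW n) : (x + y).1 = x.1 + y.1 := rfl
@[simp] lemma MW.snd_add (x y : MW n) : (x + y).2 = x.2 + y.2 := rfl
@[simp] lemma MW.fst_smul (r : ℂ) (x : MW n) : (r • x).1 = r • x.1 := rfl
@[simp] lemma MW.snd_smul (r : ℂ) (x : MW n) : (r • x).2 = r • x.2 := rfl
@[simp] lemma MW.fst_zero : ((0 : MW n)).1 = 0 := rfl
@[simp] lemma MW.snd_zero : ((0 : MW n)).2 = 0 := rfl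

noncomputable instance : Mul (MW n) :=
  ⟨fun m m' => (m.1 * m'.1 + m.2 * m'.2 * hW n, m.1 * m'.2 + m.2 * m'.1)⟩
noncomputable instance : One (MW n) := ⟨(1, 0)⟩

@[simp] lemma MW.fst_mul (x y : MW n) : (x * y).1 = x.1 * y.1 + x.2 * y.2 * hW n := rfl
@[simp] lemma MW.snd_mul (x y : MW n) : (x * y).2 = x.1 * y.2 + x.2 * y.1 := rfl
@[simp] lemma MW.fst_one : ((1 : MW n)).1 = 1 := rfl
@[simp] lemma MW.snd_one : ((1 : MW n)).2 = 0 := rfl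

lemma MW.ext {x y : MW n} (h1 : x.1 = y.1) (h2 : x.2 = y.2) : x = y := Prod.ext h1 h2

/-- A pair, as an element of `MW n`. -/
abbrev MW.mk (p q : HWeyl n) : MW n := (p, q)

@[simp] lemma MW.mk_fst (p q : HWeyl n) : (MW.mk n p q).1 = p := rfl
@[simp] lemma MW.mk_snd (p q : HWeyl n) : (MW.mk n p q).2 = q := rfl

noncomputable instance : Ring (MW n) :=
  { instAddCommGroupMW n, instMulMW n,
    instOneMW n with
    mul_assoc := by
      intro x y z
      refine MW.ext n ?_ ?_
      · simp only [MW.fst_mul, MW.snd_mul, add_mul, mul_add, mul_assoc, hW_comm]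
        abel
      · simp only [MW.fst_mul, MW.snd_mul, add_mul, mul_add, mul_assoc, hW_comm]
        abel
    one_mul := by intro x; refine MW.ext n ?_ ?_ <;> simp
    mul_one := by intro x; refine MW.ext n ?_ ?_ <;> simp
    left_distrib := by
      intro x y z
      refine MW.ext n ?_ ?_
      · simp only [MW.fst_mul, MW.snd_mul, MW.fst_add, MW.snd_add, mul_add, add_mul]
        abel
      · simp only [MW.fst_mul, MW.snd_mul, MW.fst_add, MW.snd_add, mul_add, add_mul]
        abel
    right_distrib := by
      intro x y z
      refine MW.ext n ?_ ?_
      · simp only [MW.fst_mul, MW.snd_mul, MW.fst_add, MW.snd_add, mul_add, add_mul]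
        abel
      · simp only [MW.fst_mul, MW.snd_mul, MW.fst_add, MW.snd_add, mul_add, add_mul]
        abel
    zero_mul := by intro x; refine MW.ext n ?_ ?_ <;> simp
    mul_zero := by intro x; refine MW.ext n ?_ ?_ <;> simp }

noncomputable instance : Algebra ℂ (MW n) :=
  { algebraMap :=
    { toFun := fun r => MW.mk n (algebraMap ℂ (HWeyl n) r) 0
      map_one' := by refine MW.ext n ?_ ?_ <;> simp
      map_mul' := by intro r s; refine MW.ext n ?_ ?_ <;> simp
      map_zero' := by refine MW.ext n ?_ ?_ <;> simp
      map_add' := by intro r s; refine MW.ext n ?_ ?_ <;> simp }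
    commutes' := by
      intro r x
      refine MW.ext n ?_ ?_ <;>
        simp [Algebra.commutes]
    smul_def' := by
      intro r x
      refine MW.ext n ?_ ?_ <;>
        simp [Algebra.smul_def] }

lemma MW.algebraMap_fst (r : ℂ) : (algebraMap ℂ (MW n) r).1 = algebraMap ℂ (HWeyl n) r := rfl

@[simp] lemma MW.algebraMap_snd (r : ℂ) : (algebraMap ℂ (MW n) r).2 = 0 := rfl

end Aux18M
section Aux18Maps
variable (n : ℕ) (a b : Fin n → ℂ)

lemma mkZ_eq : RingQuot.mkAlgHom ℂ (ReesRel n) (FreeAlgebra.ι ℂ (none : ReesGen n)) = reesZ n :=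
  rfl

lemma zzc (t : ReesWeyl n) : reesZ n * (reesZ n * t) = t * (reesZ n * reesZ n) := by
  rw [rZ_comm n t, ← mul_assoc, rZ_comm n t, mul_assoc]

/-- Scalar attached to each generator: `aᵢ/2` for `xᵢ`, `bᵢ/2` for `yᵢ`. -/
noncomputable def al (p : Fin n × Bool) : ℂ := (cond p.2 (b p.1) (a p.1)) / 2

/-- Image of the generators under the map `HWeyl n → ReesWeyl n`. -/
noncomputable def psiGen : ReesGen n → ReesWeyl n
  | none => reesZ n * reesZ n
  | some p => RingQuot.mkAlgHom ℂ (ReesRel n) (FreeAlgebra.ι ℂ (some p)) + al n a b p • reesZ n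

lemma psi_rel : ∀ ⦃x y : FreeAlgebra ℂ (ReesGen n)⦄, HWeylRel n x y →
    (FreeAlgebra.lift ℂ (psiGen n a b)) x = (FreeAlgebra.lift ℂ (psiGen n a b)) y := by
  intro x y hxy
  induction hxy with
  | weyl i =>
      simp only [map_mul, map_add, FreeAlgebra.lift_ι_apply, psiGen]
      have hw := RingQuot.mkAlgHom_rel ℂ (ReesRel.weyl (n := n) i)
      simp only [map_mul, map_add, mkZ_eq] at hw
      simp only [mul_add, add_mul, smul_mul_assoc, mul_smul_comm, smul_smul]
      simp only [rZ_comm]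
      rw [hw]
      module
  | comm u v h h' =>
      simp only [map_mul, FreeAlgebra.lift_ι_apply]
      match u, v with
      | none, none => rfl
      | some p, none =>
          simp only [psiGen, mul_add, add_mul, smul_mul_assoc, mul_smul_comm, mul_assoc]
          simp only [zzc]
      | none, some p =>
          simp only [psiGen, mul_add, add_mul, smul_mul_assoc, mul_smul_comm, mul_assoc]
          simp only [zzc]
      | some p, some q =>
          have hpq := RingQuot.mkAlgHom_rel ℂ (ReesRel.comm (n := n) (some p) (some q) h h')
          simp only [map_mul] at hpq
          simp only [psiGen, mul_add, add_mul, smul_mul_assoc, mul_smul_comm, smul_smul]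
          simp only [rZ_comm]
          rw [hpq]
          module

/-- The algebra map `HWeyl n → ReesWeyl n`, `Xᵢ ↦ xᵢ + (aᵢ/2)z`, `Yᵢ ↦ yᵢ + (bᵢ/2)z`,
`w ↦ z²`. -/
noncomputable def psiH : HWeyl n →ₐ[ℂ] ReesWeyl n :=
  RingQuot.liftAlgHom ℂ ⟨FreeAlgebra.lift ℂ (psiGen n a b), psi_rel n a b⟩

@[simp] lemma psiH_gen (v : ReesGen n) :
    psiH n a b (RingQuot.mkAlgHom ℂ (HWeylRel n) (FreeAlgebra.ι ℂ v)) = psiGen n a b v := by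
  rw [psiH, RingQuot.liftAlgHom_mkAlgHom_apply, FreeAlgebra.lift_ι_apply]

end Aux18Maps
section Aux18Phi
variable (n : ℕ) (a b : Fin n → ℂ)

/-- Image of the generators under the map `ReesWeyl n → MW n`:
`xᵢ ↦ (Xᵢ, -aᵢ/2)`, `yᵢ ↦ (Yᵢ, -bᵢ/2)`, `z ↦ (0, 1)`. -/
noncomputable def phiGen : ReesGen n → MW n
  | none => MW.mk n 0 1
  | some p => MW.mk n (RingQuot.mkAlgHom ℂ (HWeylRel n) (FreeAlgebra.ι ℂ (some p)))
      (algebraMap ℂ (HWeyl n) (-(al n a b p)))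

lemma phi_rel : ∀ ⦃x y : FreeAlgebra ℂ (ReesGen n)⦄, ReesRel n x y →
    (FreeAlgebra.lift ℂ (phiGen n a b)) x = (FreeAlgebra.lift ℂ (phiGen n a b)) y := by
  intro x y hxy
  induction hxy with
  | weyl i =>
      simp only [map_mul, map_add, FreeAlgebra.lift_ι_apply, phiGen]
      have hw := RingQuot.mkAlgHom_rel ℂ (HWeylRel.weyl (n := n) i)
      simp only [map_mul, map_add] at hw
      refine MW.ext n ?_ ?_
      · show _ * _ + _ = (_ * _ + _) + (0 * 0 + 1 * 1 * hW n)
        have hc : (algebraMap ℂ (HWeyl n) (-(al n a b (i, false)))) *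
            (algebraMap ℂ (HWeyl n) (-(al n a b (i, true)))) =
            (algebraMap ℂ (HWeyl n) (-(al n a b (i, true)))) *
            (algebraMap ℂ (HWeyl n) (-(al n a b (i, false)))) := by
          rw [← map_mul, ← map_mul, mul_comm]
        rw [hw, hc]
        rw [show RingQuot.mkAlgHom ℂ (HWeylRel n) (FreeAlgebra.ι ℂ (none : ReesGen n)) = hW n
          from rfl]
        simp only [zero_mul, one_mul, zero_add]
        abel
      · show _ * _ + _ * _ = (_ * _ + _ * _) + (0 * _ + 1 * 0)
        simp only [zero_mul, mul_zero, add_zero, zero_add, one_mul, Algebra.commutes]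
        abel
  | comm u v h h' =>
      simp only [map_mul, FreeAlgebra.lift_ι_apply]
      match u, v with
      | none, none => rfl
      | some p, none =>
          refine MW.ext n ?_ ?_ <;> simp [phiGen]
      | none, some p =>
          refine MW.ext n ?_ ?_ <;> simp [phiGen]
      | some p, some q =>
          have hpq := RingQuot.mkAlgHom_rel ℂ (HWeylRel.comm (n := n) (some p) (some q) h h')
          simp only [map_mul] at hpq
          refine MW.ext n ?_ ?_
          · have hc : (algebraMap ℂ (HWeyl n) (-(al n a b p))) *
                (algebraMap ℂ (HWeyl n) (-(al n a b q))) =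
                (algebraMap ℂ (HWeyl n) (-(al n a b q))) *
                (algebraMap ℂ (HWeyl n) (-(al n a b p))) := by
              rw [← map_mul, ← map_mul, mul_comm]
            simp only [MW.fst_mul, phiGen, hpq, hc]
          · simp only [MW.snd_mul, phiGen, Algebra.commutes]
            abel

/-- The algebra map `ReesWeyl n → MW n`. -/
noncomputable def phiR : ReesWeyl n →ₐ[ℂ] MW n :=
  RingQuot.liftAlgHom ℂ ⟨FreeAlgebra.lift ℂ (phiGen n a b), phi_rel n a b⟩

@[simp] lemma phiR_gen (v : ReesGen n) :
    phiR n a b (RingQuot.mkAlgHom ℂ (ReesRel n) (FreeAlgebra.ι ℂ v)) = phiGen n a b v := by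
  rw [phiR, RingQuot.liftAlgHom_mkAlgHom_apply, FreeAlgebra.lift_ι_apply]

end Aux18Phi
section Aux18Xi
variable (n : ℕ) (a b : Fin n → ℂ)

@[simp] lemma MW.fst_neg (x : MW n) : (-x).1 = -x.1 := rfl
@[simp] lemma MW.snd_neg (x : MW n) : (-x).2 = -x.2 := rfl

lemma MW.algebraMap_def (r : ℂ) :
    algebraMap ℂ (MW n) r = MW.mk n (algebraMap ℂ (HWeyl n) r) 0 := rfl

@[simp] lemma psiH_hW : psiH n a b (hW n) = reesZ n * reesZ n := psiH_gen n a b none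

/-- The linear section `MW n → ReesWeyl n`, `(p, q) ↦ ψ(p) + ψ(q)·z`. -/
noncomputable def xiM (m : MW n) : ReesWeyl n :=
  psiH n a b m.1 + psiH n a b m.2 * reesZ n

lemma xiM_add (u v : MW n) : xiM n a b (u + v) = xiM n a b u + xiM n a b v := by
  simp only [xiM, MW.fst_add, MW.snd_add, map_add, add_mul]
  abel

lemma alg_mul' {A : Type*} [Ring A] [Algebra ℂ A] (c : ℂ) (x : A) :
    algebraMap ℂ A c * x = c • x := (Algebra.smul_def c x).symm

lemma mul_alg' {A : Type*} [Ring A] [Algebra ℂ A] (c : ℂ) (x : A) :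
    x * algebraMap ℂ A c = c • x := by rw [← Algebra.commutes, alg_mul']

lemma xi_mul (t : ReesWeyl n) : ∀ m : MW n, xiM n a b (m * phiR n a b t) = xiM n a b m * t := by
  induction t using rq_induction with
  | halg r =>
      intro m
      rw [AlgHom.commutes, MW.algebraMap_def]
      simp only [xiM, MW.fst_mul, MW.snd_mul]
      show psiH n a b (m.1 * algebraMap ℂ (HWeyl n) r + m.2 * 0 * hW n) +
        psiH n a b (m.1 * 0 + m.2 * algebraMap ℂ (HWeyl n) r) * reesZ n = _
      simp only [mul_zero, zero_mul, add_zero, zero_add, map_mul, map_smul, AlgHom.commutes,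
        mul_alg', smul_mul_assoc, mul_smul_comm, smul_add, add_mul]
  | hgen v =>
      intro m
      rw [phiR_gen]
      match v with
      | none =>
          simp only [phiGen, xiM, MW.fst_mul, MW.snd_mul]
          show psiH n a b (m.1 * 0 + m.2 * 1 * hW n) +
            psiH n a b (m.1 * 1 + m.2 * 0) * reesZ n = _ * reesZ n
          simp only [mul_zero, zero_mul, mul_one, add_zero, zero_add, map_mul, psiH_hW]
          simp only [add_mul, mul_assoc]
          abel
      | some p =>
          simp only [phiGen, xiM, MW.fst_mul, MW.snd_mul]
          show psiH n a b (m.1 * _ + m.2 * algebraMap ℂ (HWeyl n) (-(al n a b p)) * hW n) +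
            psiH n a b (m.1 * algebraMap ℂ (HWeyl n) (-(al n a b p)) + m.2 * _) * reesZ n
            = _ * (RingQuot.mkAlgHom ℂ (ReesRel n) (FreeAlgebra.ι ℂ (some p)))
          simp only [map_add, map_mul, map_smul, AlgHom.commutes, psiH_hW, psiH_gen, psiGen,
            mul_alg', mul_add, add_mul, smul_mul_assoc, mul_smul_comm, smul_smul, neg_smul,
            mul_assoc]
          simp only [rZ_comm]
          module
  | hmul x y hx hy =>
      intro m
      rw [map_mul, ← mul_assoc, hy, hx, mul_assoc]
  | hadd x y hx hy =>
      intro m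
      rw [map_add, mul_add, xiM_add, hx, hy, mul_add]

lemma xi_phi (t : ReesWeyl n) : xiM n a b (phiR n a b t) = t := by
  have h := xi_mul n a b t 1
  rw [one_mul] at h
  rw [h]
  show (psiH n a b 1 + psiH n a b 0 * reesZ n) * t = t
  simp

lemma phi_psi (p : HWeyl n) :
    phiR n a b (psiH n a b p) = MW.mk n p 0 := by
  induction p using rq_induction with
  | halg r => rw [AlgHom.commutes, AlgHom.commutes, MW.algebraMap_def]
  | hgen v =>
      match v with
      | none =>
          rw [psiH_gen]
          show phiR n a b (reesZ n * reesZ n) = _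
          rw [map_mul]
          rw [show reesZ n = RingQuot.mkAlgHom ℂ (ReesRel n) (FreeAlgebra.ι ℂ (none : ReesGen n))
            from rfl, phiR_gen]
          refine MW.ext n ?_ ?_ <;> simp [phiGen, hW]
      | some q =>
          rw [psiH_gen]
          show phiR n a b (RingQuot.mkAlgHom ℂ (ReesRel n) (FreeAlgebra.ι ℂ (some q))
            + al n a b q • reesZ n) = _
          rw [map_add, map_smul, phiR_gen]
          rw [show reesZ n = RingQuot.mkAlgHom ℂ (ReesRel n) (FreeAlgebra.ι ℂ (none : ReesGen n))
            from rfl, phiR_gen]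
          refine MW.ext n ?_ ?_
          · simp [phiGen]
          · show algebraMap ℂ (HWeyl n) (-(al n a b q)) + al n a b q • (1 : HWeyl n) = 0
            rw [Algebra.algebraMap_eq_smul_one]
            module
  | hmul x y hx hy =>
      rw [map_mul, map_mul, hx, hy]
      refine MW.ext n ?_ ?_ <;> simp
  | hadd x y hx hy =>
      rw [map_add, map_add, hx, hy]
      refine MW.ext n ?_ ?_ <;> simp

lemma psiH_injective : Function.Injective (psiH n a b) := by
  intro p q h
  have := congrArg (phiR n a b) h
  rw [phi_psi, phi_psi] at this
  exact congrArg Prod.fst this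

end Aux18Xi
section Aux18Final
variable (n : ℕ) (a b : Fin n → ℂ)
variable (g : ReesWeyl n ≃ₐ[ℂ] ReesWeyl n)
variable (hx : ∀ i, g (reesX n i) = reesX n i + a i • reesZ n)
variable (hy : ∀ i, g (reesY n i) = reesY n i + b i • reesZ n)
variable (hz : g (reesZ n) = - reesZ n)

include hx hy hz in
lemma fixed_psi : ∀ p : HWeyl n, g (psiH n a b p) = psiH n a b p := by
  intro p
  induction p using rq_induction with
  | halg r => rw [AlgHom.commutes, AlgEquiv.commutes]
  | hgen v =>
      rw [psiH_gen]
      match v with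
      | none =>
          show g (reesZ n * reesZ n) = reesZ n * reesZ n
          rw [map_mul, hz]
          exact neg_mul_neg (α := ReesWeyl n) _ _
      | some (i, false) =>
          show g (reesX n i + al n a b (i, false) • reesZ n) = _
          rw [map_add, map_smul, hx, hz, show al n a b (i, false) = a i / 2 from rfl]
          show _ = reesX n i + (a i / 2) • reesZ n
          module
      | some (i, true) =>
          show g (reesY n i + al n a b (i, true) • reesZ n) = _
          rw [map_add, map_smul, hy, hz, show al n a b (i, true) = b i / 2 from rfl]
          show _ = reesY n i + (b i / 2) • reesZ n
          module
  | hmul x y hx' hy' => simp only [map_mul, hx', hy']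
  | hadd x y hx' hy' => simp only [map_add, hx', hy']

include hx hy hz in
lemma phi_g : ∀ t : ReesWeyl n,
    phiR n a b (g t) = MW.mk n (phiR n a b t).1 (-(phiR n a b t).2) := by
  intro t
  induction t using rq_induction with
  | halg r =>
      rw [AlgEquiv.commutes, AlgHom.commutes]
      refine MW.ext n ?_ ?_ <;> simp [MW.algebraMap_def]
  | hgen v =>
      match v with
      | none =>
          show phiR n a b (g (reesZ n)) = _
          rw [hz, map_neg]
          rw [show reesZ n = RingQuot.mkAlgHom ℂ (ReesRel n) (FreeAlgebra.ι ℂ (none : ReesGen n))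
            from rfl, phiR_gen]
          refine MW.ext n ?_ ?_ <;> simp [phiGen]
      | some (i, false) =>
          show phiR n a b (g (reesX n i)) = _
          rw [hx, map_add, map_smul]
          rw [show reesX n i = RingQuot.mkAlgHom ℂ (ReesRel n)
            (FreeAlgebra.ι ℂ (some (i, false))) from rfl, phiR_gen]
          rw [show reesZ n = RingQuot.mkAlgHom ℂ (ReesRel n) (FreeAlgebra.ι ℂ (none : ReesGen n))
            from rfl, phiR_gen]
          refine MW.ext n ?_ ?_
          · show _ + a i • (0 : HWeyl n) = _
            simp [phiGen]
          · show algebraMap ℂ (HWeyl n) (-(al n a b (i, false))) + a i • (1 : HWeyl n) =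
              -(algebraMap ℂ (HWeyl n) (-(al n a b (i, false))))
            rw [Algebra.algebraMap_eq_smul_one, show al n a b (i, false) = a i / 2 from rfl]
            module
      | some (i, true) =>
          show phiR n a b (g (reesY n i)) = _
          rw [hy, map_add, map_smul]
          rw [show reesY n i = RingQuot.mkAlgHom ℂ (ReesRel n)
            (FreeAlgebra.ι ℂ (some (i, true))) from rfl, phiR_gen]
          rw [show reesZ n = RingQuot.mkAlgHom ℂ (ReesRel n) (FreeAlgebra.ι ℂ (none : ReesGen n))
            from rfl, phiR_gen]
          refine MW.ext n ?_ ?_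
          · show _ + b i • (0 : HWeyl n) = _
            simp [phiGen]
          · show algebraMap ℂ (HWeyl n) (-(al n a b (i, true))) + b i • (1 : HWeyl n) =
              -(algebraMap ℂ (HWeyl n) (-(al n a b (i, true))))
            rw [Algebra.algebraMap_eq_smul_one, show al n a b (i, true) = b i / 2 from rfl]
            module
  | hmul x y hx' hy' =>
      simp only [map_mul, hx', hy']
      refine MW.ext n ?_ ?_
      · simp only [MW.fst_mul, MW.snd_mul]
        have h : -(phiR n a b x).2 * -(phiR n a b y).2 = (phiR n a b x).2 * (phiR n a b y).2 :=
          neg_mul_neg (α := HWeyl n) _ _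
        rw [h]
      · simp only [MW.fst_mul, MW.snd_mul]
        have h1 : (phiR n a b x).1 * -(phiR n a b y).2 =
            -((phiR n a b x).1 * (phiR n a b y).2) := mul_neg (α := HWeyl n) _ _
        have h2 : -(phiR n a b x).2 * (phiR n a b y).1 =
            -((phiR n a b x).2 * (phiR n a b y).1) := neg_mul (α := HWeyl n) _ _
        rw [h1, h2, neg_add]
  | hadd x y hx' hy' =>
      simp only [map_add, hx', hy']
      refine MW.ext n ?_ ?_
      · simp
      · simp only [MW.snd_add]
        abel

end Aux18Final

theorem stmt18 (n : ℕ) (hn : 1 ≤ n) (a b : Fin n → ℂ)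
    (g : ReesWeyl n ≃ₐ[ℂ] ReesWeyl n)
    (hx : ∀ i, g (reesX n i) = reesX n i + a i • reesZ n)
    (hy : ∀ i, g (reesY n i) = reesY n i + b i • reesZ n)
    (hz : g (reesZ n) = - reesZ n) :
    Nonempty ((fixedSubalgebra1 g) ≃ₐ[ℂ] HWeyl n) := by
  have hmem : ∀ p : HWeyl n, psiH n a b p ∈ fixedSubalgebra1 g :=
    fun p => fixed_psi n a b g hx hy hz p
  let Ψ' : HWeyl n →ₐ[ℂ] fixedSubalgebra1 g :=
    (psiH n a b).codRestrict (fixedSubalgebra1 g) hmem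
  have hinj : Function.Injective Ψ' := by
    intro p q h
    exact psiH_injective n a b (congrArg Subtype.val h)
  have hsurj : Function.Surjective Ψ' := by
    rintro ⟨t, ht⟩
    have ht' : g t = t := ht
    have h2 := phi_g n a b g hx hy hz t
    rw [ht'] at h2
    have hsnd : (phiR n a b t).2 = -(phiR n a b t).2 := congrArg Prod.snd h2
    have h0 : (phiR n a b t).2 = 0 := by
      have h3 : (phiR n a b t).2 + (phiR n a b t).2 = 0 := by
        nth_rewrite 2 [hsnd]
        exact add_neg_cancel _
      have h4 : (2 : ℂ) • (phiR n a b t).2 = 0 := by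
        rw [two_smul]; exact h3
      calc (phiR n a b t).2 = ((2 : ℂ)⁻¹ * 2) • (phiR n a b t).2 := by norm_num
        _ = (2 : ℂ)⁻¹ • ((2 : ℂ) • (phiR n a b t).2) := by rw [mul_smul]
        _ = 0 := by rw [h4, smul_zero]
    have hval : t = psiH n a b ((phiR n a b t).1) := by
      conv_lhs => rw [← xi_phi n a b t]
      rw [xiM, h0, map_zero, zero_mul, add_zero]
    exact ⟨(phiR n a b t).1, Subtype.ext hval.symm⟩
  exact ⟨(AlgEquiv.ofBijective Ψ' ⟨hinj, hsurj⟩).symm⟩
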